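/- Let q be a primitive ℓ-th root of unity, ℓ ≥ 2, and H_q = H/I the Hopf algebra where H is generated by D₁, D₂, σ^{±1} with relations D₁D₂ = D₂D₁, qσD_i = D_iσ, and I = (D₁^ℓ, D₂^ℓ). Then F = exp_q(t D₁ ⊗ D₂) = \sum_{i=0}^{ℓ-1} (t^i/(i)_q!) D₁^i ⊗ D₂^i ∈ (H_q ⊗ H_q)[[t]] satisfies the universal deformation formula identities: (ε⊗id)(F) = 1⊗1 = (id⊗ε)(F) and [(Δ⊗id)(F)](F⊗1) = [(id⊗Δ)(F)](1⊗F). -/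

import Mathlib

open TensorProduct

/-- The q-integer `(k)_q = 1 + q + ⋯ + q^(k-1)`. -/
noncomputable def qInt (q : ℂ) (k : ℕ) : ℂ := ∑ j ∈ Finset.range k, q ^ j

/-- The q-factorial `(i)_q! = (i)_q (i-1)_q ⋯ (1)_q`. -/
noncomputable def qFact (q : ℂ) (i : ℕ) : ℂ := ∏ j ∈ Finset.range i, qInt q (j + 1)

/-!
Let `exp_q(t w) = ∑_{i<ℓ} tⁱ wⁱ / (i)_q!` over any `ℂ`-algebra. If `z y = q y z` and
`yⁱ z^(ℓ-i) = 0`, then `exp_q(t(y + z)) = exp_q(ty) exp_q(tz)`: below degree `ℓ` this is the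
q-binomial theorem divided by `(n)_q!`, proved through `(a + b)_q = (b)_q + q^b (a)_q`, and from
degree `ℓ` on both sides vanish.

In `H ⊗ H ⊗ H` put `X = D₁ ⊗ D₂ ⊗ 1`, `Y = D₁ ⊗ σ ⊗ D₂`, `Z = 1 ⊗ D₁ ⊗ D₂`. Since `Δ ⊗ id` and
`id ⊗ Δ` are algebra maps, `(Δ ⊗ id)(F) = exp_q(t(Y + Z)) = exp_q(tY) exp_q(tZ)` and
`(id ⊗ Δ)(F) = exp_q(t(X + Y)) = exp_q(tY) exp_q(tX)`, so both sides of the cocycle identity equal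
`exp_q(tY) exp_q(tX) exp_q(tZ)`, as `X` and `Z` commute. Likewise `(ε ⊗ id)(F) = exp_q(0) = 1`.
-/

open Finset PowerSeries

theorem qInt_zero (q : ℂ) : qInt q 0 = 0 := sum_range_zero _

theorem qInt_add (q : ℂ) (a b : ℕ) : qInt q (a + b) = qInt q a + q ^ a * qInt q b := by
  simp [qInt, sum_range_add, mul_sum, pow_add]

theorem qFact_succ (q : ℂ) (n : ℕ) : qFact q (n + 1) = qFact q n * qInt q (n + 1) :=
  prod_range_succ _ _

section RootOfUnity

variable {q : ℂ} {ℓ : ℕ}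

theorem qInt_ne_zero (hq : IsPrimitiveRoot q ℓ) {k : ℕ} (h0 : 0 < k) (hk : k < ℓ) :
    qInt q k ≠ 0 := by
  intro hz
  have h := geom_sum_mul q k
  rw [show ∑ i ∈ range k, q ^ i = qInt q k from rfl, hz, zero_mul] at h
  exact hq.pow_ne_one_of_pos_of_lt h0.ne' hk (by linear_combination -h)

theorem qInt_succ_mul_qFact_succ_inv (hq : IsPrimitiveRoot q ℓ) {k : ℕ} (hk : k + 1 < ℓ) :
    qInt q (k + 1) * (qFact q (k + 1))⁻¹ = (qFact q k)⁻¹ := by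
  rw [qFact_succ, mul_inv, mul_left_comm, mul_inv_cancel₀ (qInt_ne_zero hq k.succ_pos hk),
    mul_one]

end RootOfUnity

theorem pow_mul_pow_eq_zero {M : Type*} [MonoidWithZero M] {y z : M} {ℓ : ℕ}
    (hnil : ∀ i < ℓ, y ^ i * z ^ (ℓ - i) = 0) {i j : ℕ} (hi : i < ℓ) (hij : ℓ ≤ i + j) :
    y ^ i * z ^ j = 0 := by
  rw [show j = (ℓ - i) + (i + j - ℓ) by omega, pow_add, ← mul_assoc, hnil i hi, zero_mul]

section QBinomial

variable {A : Type*} [Ring A] [Algebra ℂ A] {q : ℂ} {ℓ : ℕ} {y z : A}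

theorem pow_mul_of_mul_eq_smul_mul (h : z * y = q • (y * z)) (m : ℕ) :
    z ^ m * y = q ^ m • (y * z ^ m) := by
  induction m with
  | zero => simp
  | succ m ih =>
    rw [pow_succ, mul_assoc, h, mul_smul_comm, ← mul_assoc, ih, smul_mul_assoc, smul_smul,
      ← pow_succ', mul_assoc]

theorem sum_antidiagonal_qFact_inv_mul_add (hq : IsPrimitiveRoot q ℓ) (h : z * y = q • (y * z))
    {n : ℕ} (hn : n + 1 < ℓ) :
    (∑ p ∈ antidiagonal n, ((qFact q p.1)⁻¹ * (qFact q p.2)⁻¹) • (y ^ p.1 * z ^ p.2)) *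
        (y + z) =
      qInt q (n + 1) •
        ∑ p ∈ antidiagonal (n + 1), ((qFact q p.1)⁻¹ * (qFact q p.2)⁻¹) • (y ^ p.1 * z ^ p.2) := by
  have hc : ∀ k ≤ n, qInt q (k + 1) * (qFact q (k + 1))⁻¹ = (qFact q k)⁻¹ :=
    fun k hk => qInt_succ_mul_qFact_succ_inv hq (by omega)
  -- `(a + b)_q = (b)_q + q ^ b (a)_q` splits the right side into the two halves of the left
  have hsplit : qInt q (n + 1) •
        ∑ p ∈ antidiagonal (n + 1), ((qFact q p.1)⁻¹ * (qFact q p.2)⁻¹) • (y ^ p.1 * z ^ p.2) =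
      ∑ p ∈ antidiagonal (n + 1),
          (q ^ p.2 * qInt q p.1 * (qFact q p.1)⁻¹ * (qFact q p.2)⁻¹) • (y ^ p.1 * z ^ p.2) +
        ∑ p ∈ antidiagonal (n + 1),
          (qInt q p.2 * (qFact q p.1)⁻¹ * (qFact q p.2)⁻¹) • (y ^ p.1 * z ^ p.2) := by
    rw [smul_sum, ← sum_add_distrib]
    refine sum_congr rfl fun p hp => ?_
    rw [smul_smul, ← add_smul, ← mem_antidiagonal.mp hp, add_comm p.1, qInt_add]
    ring_nf
  rw [hsplit, Nat.sum_antidiagonal_succ, Nat.sum_antidiagonal_succ', mul_add, sum_mul, sum_mul]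
  simp only [qInt_zero, mul_zero, zero_mul, zero_smul, zero_add]
  congr 1 <;> refine sum_congr rfl fun p hp => ?_
  · rw [mul_assoc (q ^ p.2), hc p.1 (by have := mem_antidiagonal.mp hp; omega), smul_mul_assoc,
      mul_assoc, pow_mul_of_mul_eq_smul_mul h, mul_smul_comm, ← mul_assoc, ← pow_succ, smul_smul]
    ring_nf
  · rw [mul_right_comm, hc p.2 (by have := mem_antidiagonal.mp hp; omega), smul_mul_assoc,
      mul_assoc, ← pow_succ, mul_comm (qFact q p.2)⁻¹]

theorem qFact_inv_smul_add_pow (hq : IsPrimitiveRoot q ℓ) (h : z * y = q • (y * z)) {n : ℕ}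
    (hn : n < ℓ) :
    (qFact q n)⁻¹ • (y + z) ^ n =
      ∑ p ∈ antidiagonal n, ((qFact q p.1)⁻¹ * (qFact q p.2)⁻¹) • (y ^ p.1 * z ^ p.2) := by
  induction n with
  | zero => simp [qFact]
  | succ n ih =>
    rw [← inv_smul_smul₀ (qInt_ne_zero hq n.succ_pos hn) (∑ p ∈ antidiagonal (n + 1), _),
      ← sum_antidiagonal_qFact_inv_mul_add hq h hn, ← ih (by omega), qFact_succ, pow_succ,
      smul_mul_assoc, smul_smul, mul_inv, mul_comm]

end QBinomial

/-- `exp_q(t w)`, as a power series in `t`. -/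
noncomputable def expq {A : Type*} [Ring A] [Algebra ℂ A] (q : ℂ) (ℓ : ℕ) (w : A) : A⟦X⟧ :=
  mk fun i => if i < ℓ then (qFact q i)⁻¹ • w ^ i else 0

section ExpQ

variable {A B : Type*} [Ring A] [Algebra ℂ A] [Ring B] [Algebra ℂ B] {q : ℂ} {ℓ : ℕ}

@[simp]
theorem coeff_expq (w : A) (n : ℕ) :
    coeff n (expq q ℓ w) = if n < ℓ then (qFact q n)⁻¹ • w ^ n else 0 :=
  coeff_mk _ _

theorem expq_zero (hℓ : 0 < ℓ) : expq q ℓ (0 : A) = 1 := by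
  ext (_ | n) <;> simp [qFact, hℓ]

theorem AlgHom.map_coeff_expq (f : A →ₐ[ℂ] B) (w : A) (n : ℕ) :
    f (coeff n (expq q ℓ w)) = coeff n (expq q ℓ (f w)) := by
  simp [apply_ite f]

theorem expq_add (hq : IsPrimitiveRoot q ℓ) {y z : A} (h : z * y = q • (y * z))
    (hnil : ∀ i < ℓ, y ^ i * z ^ (ℓ - i) = 0) :
    expq q ℓ (y + z) = expq q ℓ y * expq q ℓ z := by
  ext n
  rw [coeff_mul, coeff_expq]
  split_ifs with hn
  · rw [qFact_inv_smul_add_pow hq h hn]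
    refine sum_congr rfl fun p hp => ?_
    have := mem_antidiagonal.mp hp
    rw [coeff_expq, coeff_expq, if_pos (by omega), if_pos (by omega), smul_mul_smul_comm]
  · refine (sum_eq_zero fun p hp => ?_).symm
    have := mem_antidiagonal.mp hp
    simp only [coeff_expq]
    split_ifs with h1
    · rw [smul_mul_smul_comm, pow_mul_pow_eq_zero hnil h1 (by omega), smul_zero]
    all_goals simp

theorem Commute.expq {x w : A} (h : Commute x w) : Commute (expq q ℓ x) (expq q ℓ w) := by
  ext n
  rw [coeff_mul, coeff_mul, ← Nat.sum_antidiagonal_swap]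
  refine sum_congr rfl fun p _ => ?_
  simp only [coeff_expq, Prod.fst_swap, Prod.snd_swap]
  split_ifs
  · rw [smul_mul_smul_comm, smul_mul_smul_comm, mul_comm (qFact q p.2)⁻¹, (h.pow_pow _ _).eq]
  all_goals simp

end ExpQ

section Bialgebra

variable {H : Type*} [Ring H] [Bialgebra ℂ H] {q : ℂ} {ℓ : ℕ}

theorem lid_map_counit_coeff_expq (a b : H) (n : ℕ) :
    TensorProduct.lid ℂ H
        (TensorProduct.map (Coalgebra.counit (R := ℂ)) LinearMap.id
          (coeff n (expq q ℓ (a ⊗ₜ[ℂ] b)))) =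
      coeff n (expq q ℓ (Coalgebra.counit (R := ℂ) a • b)) :=
  ((Algebra.TensorProduct.lid ℂ H).toAlgHom.comp
    (Algebra.TensorProduct.map (Bialgebra.counitAlgHom ℂ H) (AlgHom.id ℂ H))).map_coeff_expq _ n

theorem rid_map_counit_coeff_expq (a b : H) (n : ℕ) :
    TensorProduct.rid ℂ H
        (TensorProduct.map LinearMap.id (Coalgebra.counit (R := ℂ))
          (coeff n (expq q ℓ (a ⊗ₜ[ℂ] b)))) =
      coeff n (expq q ℓ (Coalgebra.counit (R := ℂ) b • a)) :=
  ((Algebra.TensorProduct.rid ℂ ℂ H).toAlgHom.comp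
    (Algebra.TensorProduct.map (AlgHom.id ℂ H) (Bialgebra.counitAlgHom ℂ H))).map_coeff_expq _ n

theorem sum_assoc_map_comul_mul_tmul_one (a b : H) (n : ℕ) :
    ∑ p ∈ antidiagonal n, Algebra.TensorProduct.assoc ℂ ℂ ℂ H H H
        (TensorProduct.map (Coalgebra.comul (R := ℂ)) LinearMap.id
            (coeff p.1 (expq q ℓ (a ⊗ₜ[ℂ] b))) *
          (coeff p.2 (expq q ℓ (a ⊗ₜ[ℂ] b)) ⊗ₜ[ℂ] (1 : H))) =
      coeff n
        (expq q ℓ (Algebra.TensorProduct.assoc ℂ ℂ ℂ H H H (Coalgebra.comul (R := ℂ) a ⊗ₜ[ℂ] b)) *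
          expq q ℓ (a ⊗ₜ[ℂ] (b ⊗ₜ[ℂ] (1 : H)))) := by
  rw [coeff_mul]
  refine sum_congr rfl fun p _ => ?_
  rw [map_mul]
  exact congr_arg₂ (· * ·)
    (((Algebra.TensorProduct.assoc ℂ ℂ ℂ H H H).toAlgHom.comp
      (Algebra.TensorProduct.map (Bialgebra.comulAlgHom ℂ H) (AlgHom.id ℂ H))).map_coeff_expq _ _)
    (((Algebra.TensorProduct.assoc ℂ ℂ ℂ H H H).toAlgHom.comp
      Algebra.TensorProduct.includeLeft).map_coeff_expq _ _)

theorem sum_map_comul_mul_one_tmul (a b : H) (n : ℕ) :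
    ∑ p ∈ antidiagonal n,
        TensorProduct.map LinearMap.id (Coalgebra.comul (R := ℂ))
            (coeff p.1 (expq q ℓ (a ⊗ₜ[ℂ] b))) *
          ((1 : H) ⊗ₜ[ℂ] coeff p.2 (expq q ℓ (a ⊗ₜ[ℂ] b))) =
      coeff n (expq q ℓ (a ⊗ₜ[ℂ] Coalgebra.comul (R := ℂ) b) *
        expq q ℓ ((1 : H) ⊗ₜ[ℂ] (a ⊗ₜ[ℂ] b))) := by
  rw [coeff_mul]
  exact sum_congr rfl fun p _ => congr_arg₂ (· * ·)
    ((Algebra.TensorProduct.map (AlgHom.id ℂ H) (Bialgebra.comulAlgHom ℂ H)).map_coeff_expq _ _)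
    ((Algebra.TensorProduct.includeRight (R := ℂ) (A := H)).map_coeff_expq _ _)

end Bialgebra

theorem expq_is_universal_deformation_formula_general {H : Type*} [Ring H] [Bialgebra ℂ H]
    {q : ℂ} {ℓ : ℕ} (hℓ : 2 ≤ ℓ) (hq : IsPrimitiveRoot q ℓ)
    (D₁ D₂ σ : H)
    (hcomm : D₁ * D₂ = D₂ * D₁)
    (hskew1 : q • (σ * D₁) = D₁ * σ)
    (hskew2 : q • (σ * D₂) = D₂ * σ)
    (hnil1 : D₁ ^ ℓ = 0) (hnil2 : D₂ ^ ℓ = 0)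
    (hΔ1 : Coalgebra.comul (R := ℂ) D₁ = D₁ ⊗ₜ σ + 1 ⊗ₜ D₁)
    (hΔ2 : Coalgebra.comul (R := ℂ) D₂ = D₂ ⊗ₜ 1 + σ ⊗ₜ D₂)
    (hε1 : Coalgebra.counit (R := ℂ) D₁ = 0)
    (hε2 : Coalgebra.counit (R := ℂ) D₂ = 0)
    (F : ℕ → H ⊗[ℂ] H)
    (hF : ∀ i : ℕ, F i = if i < ℓ then (qFact q i)⁻¹ • ((D₁ ^ i) ⊗ₜ (D₂ ^ i)) else 0) :
    (∀ n : ℕ,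
      (TensorProduct.lid ℂ H)
          ((TensorProduct.map (Coalgebra.counit (R := ℂ)) LinearMap.id) (F n))
        = if n = 0 then 1 else 0) ∧
    (∀ n : ℕ,
      (TensorProduct.rid ℂ H)
          ((TensorProduct.map LinearMap.id (Coalgebra.counit (R := ℂ))) (F n))
        = if n = 0 then 1 else 0) ∧
    (∀ n : ℕ,
      ∑ p ∈ Finset.HasAntidiagonal.antidiagonal n,
          (Algebra.TensorProduct.assoc ℂ ℂ ℂ H H H)
            ((TensorProduct.map (Coalgebra.comul (R := ℂ)) LinearMap.id) (F p.1)
              * (F p.2 ⊗ₜ (1 : H)))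
        = ∑ p ∈ Finset.HasAntidiagonal.antidiagonal n,
          (TensorProduct.map LinearMap.id (Coalgebra.comul (R := ℂ))) (F p.1)
            * ((1 : H) ⊗ₜ F p.2)) := by
  have hF_coeff : ∀ n, F n = coeff n (expq q ℓ (D₁ ⊗ₜ[ℂ] D₂)) := fun n => by
    rw [hF, coeff_expq, Algebra.TensorProduct.tmul_pow]
  simp only [hF_coeff]
  refine ⟨fun n => ?_, fun n => ?_, fun n => ?_⟩
  · rw [lid_map_counit_coeff_expq, hε1, zero_smul, expq_zero (by omega), coeff_one]
  · rw [rid_map_counit_coeff_expq, hε2, zero_smul, expq_zero (by omega), coeff_one]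
  set X : H ⊗[ℂ] (H ⊗[ℂ] H) := D₁ ⊗ₜ (D₂ ⊗ₜ 1)
  set Y : H ⊗[ℂ] (H ⊗[ℂ] H) := D₁ ⊗ₜ (σ ⊗ₜ D₂)
  set Z : H ⊗[ℂ] (H ⊗[ℂ] H) := 1 ⊗ₜ (D₁ ⊗ₜ D₂)
  have hZY : Z * Y = q • (Y * Z) := by
    simp only [Y, Z, Algebra.TensorProduct.tmul_mul_tmul, one_mul, mul_one, ← hskew1,
      ← smul_tmul', tmul_smul]
  have hXY : X * Y = q • (Y * X) := by
    simp only [X, Y, Algebra.TensorProduct.tmul_mul_tmul, one_mul, mul_one, ← hskew2,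
      ← smul_tmul', tmul_smul]
  have hYZ : ∀ i < ℓ, Y ^ i * Z ^ (ℓ - i) = 0 := fun i hi => by
    simp [Y, Z, Algebra.TensorProduct.tmul_pow, Algebra.TensorProduct.tmul_mul_tmul, ← pow_add,
      Nat.add_sub_cancel' hi.le, hnil2]
  have hYX : ∀ i < ℓ, Y ^ i * X ^ (ℓ - i) = 0 := fun i hi => by
    simp [X, Y, Algebra.TensorProduct.tmul_pow, Algebra.TensorProduct.tmul_mul_tmul, ← pow_add,
      Nat.add_sub_cancel' hi.le, hnil1]
  have hXZ : Commute X Z := by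
    simp [Commute, SemiconjBy, X, Z, Algebra.TensorProduct.tmul_mul_tmul, hcomm]
  have hΔ₁ :
      Algebra.TensorProduct.assoc ℂ ℂ ℂ H H H (Coalgebra.comul (R := ℂ) D₁ ⊗ₜ D₂) = Y + Z := by
    simp [hΔ1, add_tmul, Y, Z]
  have hΔ₂ : D₁ ⊗ₜ Coalgebra.comul (R := ℂ) D₂ = X + Y := by
    simp [hΔ2, tmul_add, X, Y]
  rw [sum_assoc_map_comul_mul_tmul_one, sum_map_comul_mul_one_tmul, hΔ₁, hΔ₂, add_comm X,
    expq_add hq hZY hYZ, expq_add hq hXY hYX, mul_assoc, mul_assoc, hXZ.expq.eq]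

/-- Theorem 3.2 (root of unity case): in the Hopf algebra `H_q` (a bialgebra `H`
with elements `D₁, D₂, σ^{±1}` satisfying `D₁D₂ = D₂D₁`, `qσDᵢ = Dᵢσ`,
`D₁^ℓ = D₂^ℓ = 0`, with `Δ(D₁) = D₁⊗σ + 1⊗D₁`, `Δ(D₂) = D₂⊗1 + σ⊗D₂`,
`Δ(σ) = σ⊗σ`, `ε(D₁) = ε(D₂) = 0`, `ε(σ) = 1`), the element
`F = exp_q(t D₁ ⊗ D₂) = Σ_{i<ℓ} (tⁱ/(i)_q!) D₁ⁱ ⊗ D₂ⁱ` satisfies the universal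
deformation formula identities `(ε⊗id)(F) = 1⊗1 = (id⊗ε)(F)` and
`[(Δ⊗id)(F)](F⊗1) = [(id⊗Δ)(F)](1⊗F)` (stated coefficientwise in `t`). -/
theorem expq_is_universal_deformation_formula {H : Type*} [Ring H] [Bialgebra ℂ H]
    {q : ℂ} {ℓ : ℕ} (hℓ : 2 ≤ ℓ) (hq : IsPrimitiveRoot q ℓ)
    (D₁ D₂ σ σinv : H)
    (hcomm : D₁ * D₂ = D₂ * D₁)
    (hskew1 : q • (σ * D₁) = D₁ * σ)
    (hskew2 : q • (σ * D₂) = D₂ * σ)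
    (hinv1 : σ * σinv = 1) (hinv2 : σinv * σ = 1)
    (hnil1 : D₁ ^ ℓ = 0) (hnil2 : D₂ ^ ℓ = 0)
    (hΔ1 : Coalgebra.comul (R := ℂ) D₁ = D₁ ⊗ₜ σ + 1 ⊗ₜ D₁)
    (hΔ2 : Coalgebra.comul (R := ℂ) D₂ = D₂ ⊗ₜ 1 + σ ⊗ₜ D₂)
    (hΔσ : Coalgebra.comul (R := ℂ) σ = σ ⊗ₜ σ)
    (hε1 : Coalgebra.counit (R := ℂ) D₁ = 0)
    (hε2 : Coalgebra.counit (R := ℂ) D₂ = 0)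
    (hεσ : Coalgebra.counit (R := ℂ) σ = 1)
    (F : ℕ → H ⊗[ℂ] H)
    (hF : ∀ i : ℕ, F i = if i < ℓ then (qFact q i)⁻¹ • ((D₁ ^ i) ⊗ₜ (D₂ ^ i)) else 0) :
    (∀ n : ℕ,
      (TensorProduct.lid ℂ H)
          ((TensorProduct.map (Coalgebra.counit (R := ℂ)) LinearMap.id) (F n))
        = if n = 0 then 1 else 0) ∧
    (∀ n : ℕ,
      (TensorProduct.rid ℂ H)
          ((TensorProduct.map LinearMap.id (Coalgebra.counit (R := ℂ))) (F n))
        = if n = 0 then 1 else 0) ∧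
    (∀ n : ℕ,
      ∑ p ∈ Finset.HasAntidiagonal.antidiagonal n,
          (Algebra.TensorProduct.assoc ℂ ℂ ℂ H H H)
            ((TensorProduct.map (Coalgebra.comul (R := ℂ)) LinearMap.id) (F p.1)
              * (F p.2 ⊗ₜ (1 : H)))
        = ∑ p ∈ Finset.HasAntidiagonal.antidiagonal n,
          (TensorProduct.map LinearMap.id (Coalgebra.comul (R := ℂ))) (F p.1)
            * ((1 : H) ⊗ₜ F p.2)) :=
  expq_is_universal_deformation_formula_general hℓ hq D₁ D₂ σ hcomm hskew1 hskew2 hnil1 hnil2 hΔ1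
    hΔ2 hε1 hε2 F hF
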